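/- Let l ≥ 1 be an integer, and let a, b ≥ 0 be real numbers satisfying 2·l·b ≤ a. Suppose a nonnegative sequence (D_j)_{j=0}^l satisfies D_0 = 0 and the recursion D_j ≤ (a + b) D_{j-1} + b·a^j for all 1 ≤ j ≤ l. Then D_l ≤ a^{l+1}. -/
import Mathlib


theorem recursion_bound (l : ℕ) (hl : 1 ≤ l) (a b : ℝ) (ha : 0 ≤ a) (hb : 0 ≤ b)
    (hab : 2 * l * b ≤ a) (D : ℕ → ℝ) (hnn : ∀ j ≤ l, 0 ≤ D j) (hD0 : D 0 = 0)
    (hrec : ∀ j, 1 ≤ j → j ≤ l → D j ≤ (a + b) * D (j - 1) + b * a ^ j) :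
    D l ≤ a ^ (l + 1) := by
  have key : ∀ j, j ≤ l → D j ≤ 2 * j * b * a ^ j := by
    intro j
    induction j with
    | zero => intro _; simp [hD0]
    | succ n ih =>
      intro h
      have hn : n ≤ l := Nat.le_of_succ_le h
      have ihn := ih hn
      have h1 : D (n + 1) ≤ (a + b) * D n + b * a ^ (n + 1) := by
        simpa using hrec (n + 1) (Nat.succ_le_succ (Nat.zero_le n)) h
      have hab' : 2 * (n : ℝ) * b ≤ a := by
        refine le_trans ?_ hab
        have : (n : ℝ) ≤ l := by exact_mod_cast hn
        nlinarith
      have hpow : (0:ℝ) ≤ a ^ n := pow_nonneg ha n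
      have h2 : (a + b) * D n ≤ (a + b) * (2 * n * b * a ^ n) :=
        mul_le_mul_of_nonneg_left ihn (by linarith)
      have h3 : (a + b) * (2 * n * b * a ^ n) + b * a ^ (n + 1)
          ≤ 2 * (n + 1 : ℕ) * b * a ^ (n + 1) := by
        push_cast
        have hmul : 2 * (n : ℝ) * b * (b * a ^ n) ≤ a * (b * a ^ n) :=
          mul_le_mul_of_nonneg_right hab' (mul_nonneg hb hpow)
        ring_nf
        ring_nf at hmul
        nlinarith [mul_nonneg (mul_nonneg hb hb) hpow]
      linarith
  have hfin := key l le_rfl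
  have : 2 * (l : ℝ) * b * a ^ l ≤ a * a ^ l :=
    mul_le_mul_of_nonneg_right hab (pow_nonneg ha l)
  calc D l ≤ 2 * l * b * a ^ l := hfin
    _ ≤ a * a ^ l := this
    _ = a ^ (l + 1) := by ring
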